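/- (Cost of the diagonal alignments in the min-plus gadget) Fix integers p, q ≥ 1, matrices A ∈ [-E,E]^{p×q}, B ∈ [-E,E]^{q×r}, an index ℓ ∈ [0,r), and large constants E ≪ D ≪ F. With strings X_ℓ = x_0⋯x_{p-1} x_p^{(ℓ)} x_{p+1}⋯x_{2p} and Y = y_0⋯y_{2p+q-1} over disjoint alphabets, and the weight function w_{A,B} defined by: insertions and deletions cost F; w(x_i, y_{i+j}) = F + A_{i,j} − A_{i+1,j} + (q−j)D for i ∈ [0,p), j ∈ [0,q) (with A_{p,j} := 0); w(x_p^{(ℓ)}, y_{p+j}) = F + B_{j,ℓ}; w(x_{p+i}, y_{p+i+j}) = F + (j+1)D for i ∈ [1,p], j ∈ [0,q); all other substitutions cost 2F. Then for each i ∈ [0,p) and j ∈ [0,q), the alignment A_{i,j,ℓ} that inserts Y[0..i+j), substitutes X_ℓ[i..2p−i+1) diagonally onto Y[i+j..2p−i+j+1), and inserts the remaining suffix of Y, has total cost exactly |Y|·F + (p−i)(q+1)·D + A_{i,j} + B_{j,ℓ}. -/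

import Mathlib

abbrev Pt : Type := ℕ × ℕ

/-- A single step in an alignment path: right (deletion of an `X`-character),
down (insertion of a `Y`-character), or diagonal (aligning a pair of characters). -/
def AlignStep (p q : Pt) : Prop :=
  q = (p.1 + 1, p.2) ∨ q = (p.1, p.2 + 1) ∨ q = (p.1 + 1, p.2 + 1)

/-- `A` is a monotone lattice path from `s` to `t` in the alignment graph. -/
def IsPath (s t : Pt) (A : List Pt) : Prop :=
  A.head? = some s ∧ A.getLast? = some t ∧ A.Chain' AlignStep

/-- The edges (consecutive pairs) of a path. -/
def edges (A : List Pt) : List (Pt × Pt) := A.zip A.tail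

/-- Unweighted edit cost contributed by one edge: a diagonal edge costs 0 if the
two characters match and 1 otherwise (substitution); horizontal/vertical edges
(deletions/insertions) cost 1. -/
def edStep {α : Type*} [DecidableEq α] (X Y : List α) (e : Pt × Pt) : ℕ :=
  if e.2 = (e.1.1 + 1, e.1.2 + 1) then (if X[e.1.1]? = Y[e.1.2]? then 0 else 1) else 1

/-- The number of edits made by the alignment (path) `A` of `X` onto `Y`. -/
def edCost {α : Type*} [DecidableEq α] (X Y : List α) (A : List Pt) : ℕ :=
  ((edges A).map (edStep X Y)).sum

/-- Weighted cost contributed by one edge, under weight function `w` (with `none` playing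
the role of `ε`): diagonal edges cost `w X[x] Y[y]`, horizontal `w X[x] ε`, vertical `w ε Y[y]`. -/
noncomputable def wStep {α : Type*} (w : Option α → Option α → ℝ) (X Y : List α)
    (e : Pt × Pt) : ℝ :=
  if e.2 = (e.1.1 + 1, e.1.2 + 1) then w X[e.1.1]? Y[e.1.2]?
  else if e.2 = (e.1.1 + 1, e.1.2) then w X[e.1.1]? none
  else w none Y[e.1.2]?

/-- The weighted cost of the alignment (path) `A` of `X` onto `Y` under `w`. -/
noncomputable def wCost {α : Type*} (w : Option α → Option α → ℝ) (X Y : List α)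
    (A : List Pt) : ℝ :=
  ((edges A).map (wStep w X Y)).sum

/-- Unweighted (Levenshtein) edit distance. -/
noncomputable def ed {α : Type*} [DecidableEq α] (X Y : List α) : ℕ :=
  sInf { c | ∃ A, IsPath (0, 0) (X.length, Y.length) A ∧ edCost X Y A = c }

/-- Weighted edit distance under `w`. -/
noncomputable def wed {α : Type*} (w : Option α → Option α → ℝ) (X Y : List α) : ℝ :=
  sInf { c | ∃ A, IsPath (0, 0) (X.length, Y.length) A ∧ wCost w X Y A = c }

/-- A path contains no diagonal edge on the main diagonal,
i.e. it never aligns a character to itself. -/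
def NoSelfDiag (A : List Pt) : Prop :=
  ∀ e ∈ edges A, ¬ (e.1.1 = e.1.2 ∧ e.2 = (e.1.1 + 1, e.1.2 + 1))

/-- The self-edit distance of `X`: the minimum number of edits over all
self-alignments of `X` (alignments of `X` onto itself never aligning a character
to itself). -/
noncomputable def selfed {α : Type*} [DecidableEq α] (X : List α) : ℕ :=
  sInf { c | ∃ A, IsPath (0, 0) (X.length, X.length) A ∧ NoSelfDiag A ∧ edCost X X A = c }

/-- The fragment `X[a..b)`. -/
def frag {α : Type*} (X : List α) (a b : ℕ) : List α := (X.drop a).take (b - a)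

/-- Characters of the min-plus gadget: `(0, i)` is `x_i` (for `i ≠ p`), `(1, ℓ)` is the
special middle character `x_p^{(ℓ)}`, and `(2, m)` is `y_m`. -/
abbrev GChar : Type := ℕ × ℕ

/-- The gadget weight function `w_{A,B}` (with the convention `A p j = 0` imposed as a
hypothesis): insertions and deletions cost `F`; the allowed diagonal substitutions cost
`F` plus the structured lower-order terms; everything else costs `2F`. -/
noncomputable def gadgetW (p q : ℕ) (A B : ℕ → ℕ → ℤ) (D F : ℝ) :
    Option GChar → Option GChar → ℝ
  | some (0, i), some (2, m) =>
      if i < p ∧ i ≤ m ∧ m < i + q then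
        F + (A i (m - i) : ℝ) - (A (i + 1) (m - i) : ℝ) + ((q - (m - i) : ℕ) : ℝ) * D
      else if p + 1 ≤ i ∧ i ≤ 2 * p ∧ i ≤ m ∧ m < i + q then
        F + (((m - i) + 1 : ℕ) : ℝ) * D
      else 2 * F
  | some (1, l), some (2, m) =>
      if p ≤ m ∧ m < p + q then F + (B (m - p) l : ℝ) else 2 * F
  | some _, some _ => 2 * F
  | some _, none => F
  | none, some _ => F
  | none, none => 0

/-- The string `X_ℓ = x_0 ⋯ x_{p-1} x_p^{(ℓ)} x_{p+1} ⋯ x_{2p}` (of length `2p+1`). -/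
def gadgetX (p l : ℕ) : List GChar :=
  ((List.range p).map fun i => (0, i)) ++ [(1, l)] ++
    ((List.range p).map fun i => (0, p + 1 + i))

/-- The string `Y = y_0 ⋯ y_{2p+q-1}`. -/
def gadgetY (p q : ℕ) : List GChar := (List.range (2 * p + q)).map fun m => (2, m)

/-- The alignment `A_{i,j,ℓ}`: insert `Y[0..i+j)`, then go diagonally substituting
`X_ℓ[i..2p+1-i)` onto `Y[i+j..2p+1-i+j)`, then insert the remaining suffix of `Y`. -/
def gadgetPath (p q i j : ℕ) : List Pt :=
  ((List.range (i + j + 1)).map fun t => ((i, t) : Pt)) ++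
  ((List.range (2 * p + 1 - 2 * i)).map fun s => ((i + s + 1, i + j + s + 1) : Pt)) ++
  ((List.range (q + i - j - 1)).map fun t => ((2 * p + 1 - i, 2 * p + 1 - i + j + t + 1) : Pt))

/-! The `u`-th edge of `A_{i,j,ℓ}` leaves row `u` of `Y`. Rows `u < i + j` and `u ≥ 2p+1-i+j`
are insertions of cost `F`; in between the path substitutes `x_{u-j}` for `y_u`. For the first
`p - i` of these the costs `F + A_{u-j,j} - A_{u-j+1,j} + (q-j)D` telescope to
`(p-i)(F + (q-j)D) + A_{i,j}` because `A_{p,j} = 0`; then comes `x_p^{(ℓ)}` at cost `F + B_{j,ℓ}`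
and `p - i` substitutions of cost `F + (j+1)D`. The `|Y|` edges each contribute one `F`. -/

section PathsFromMaps

variable {α : Type*}

lemma edges_map_range (f : ℕ → Pt) (n : ℕ) :
    edges ((List.range (n + 1)).map f) = (List.range n).map fun k => (f k, f (k + 1)) := by
  apply List.ext_getElem
  · simp [edges]
  · intro k _ _
    simp [edges, List.getElem_zip]

lemma wCost_map_range (w : Option α → Option α → ℝ) (X Y : List α) (f : ℕ → Pt) (n : ℕ) :
    wCost w X Y ((List.range (n + 1)).map f) =
      ∑ k ∈ Finset.range n, wStep w X Y (f k, f (k + 1)) := by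
  rw [wCost, edges_map_range, List.map_map]
  rfl

lemma isPath_map_range (f : ℕ → Pt) (n : ℕ) (hf : ∀ k < n, AlignStep (f k) (f (k + 1))) :
    IsPath (f 0) (f n) ((List.range (n + 1)).map f) := by
  refine ⟨by simp [List.head?_eq_getElem?], by simp [List.getLast?_eq_getElem?], ?_⟩
  exact (List.isChain_map f).2 ((List.isChain_range_succ _ n).2 hf)

lemma wStep_vertical (w : Option α → Option α → ℝ) (X Y : List α) (a b : ℕ) :
    wStep w X Y ((a, b), (a, b + 1)) = w none Y[b]? := by
  simp [wStep]

lemma wStep_diagonal (w : Option α → Option α → ℝ) (X Y : List α) (a b : ℕ) :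
    wStep w X Y ((a, b), (a + 1, b + 1)) = w X[a]? Y[b]? := by
  simp [wStep]

end PathsFromMaps

lemma sum_range_eq_blocks {M : Type*} [AddCommMonoid M] (c : ℕ → M) {a b d n : ℕ}
    (hab : a ≤ b) (hbd : b < d) (hdn : d ≤ n) :
    ∑ u ∈ Finset.range n, c u =
      ∑ u ∈ Finset.Ico 0 a, c u + ∑ t ∈ Finset.range (b - a), c (a + t) + c b +
        ∑ u ∈ Finset.Ico (b + 1) d, c u + ∑ u ∈ Finset.Ico d n, c u := by
  rw [Finset.range_eq_Ico, ← Finset.sum_Ico_consecutive c (Nat.zero_le a) (by omega : a ≤ n),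
    ← Finset.sum_Ico_consecutive c hab (by omega : b ≤ n),
    ← Finset.sum_Ico_consecutive c (Nat.le_succ b) (by omega : b + 1 ≤ n),
    ← Finset.sum_Ico_consecutive c hbd hdn, Finset.sum_Ico_eq_sum_range c a,
    Nat.Ico_succ_singleton, Finset.sum_singleton]
  simp only [add_assoc]

def gadgetPt (p i j u : ℕ) : Pt := (min (max i (u - j)) (2 * p + 1 - i), u)

lemma alignStep_gadgetPt (p i j u : ℕ) :
    AlignStep (gadgetPt p i j u) (gadgetPt p i j (u + 1)) := by
  simp only [AlignStep, gadgetPt, Prod.mk.injEq, min_def, max_def, and_true]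
  split_ifs <;> omega

lemma gadgetPath_eq_map {p q i j : ℕ} (hi : i < p) (hj : j < q) :
    gadgetPath p q i j = (List.range (2 * p + q + 1)).map (gadgetPt p i j) := by
  apply List.ext_getElem
  · simp [gadgetPath]; omega
  · intro k h1 _
    simp only [gadgetPath, List.length_map, List.length_range, List.length_append] at h1 ⊢
    rcases Nat.lt_or_ge k (i + j + 1) with h | h
    · rw [List.getElem_append_left (by simp; omega), List.getElem_append_left (by simp; omega)]
      simp [gadgetPt]; omega
    rcases Nat.lt_or_ge k (i + j + 1 + (2 * p + 1 - 2 * i)) with h' | h'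
    · rw [List.getElem_append_left (by simp; omega), List.getElem_append_right (by simp; omega)]
      simp [gadgetPt]; omega
    · rw [List.getElem_append_right (by simp; omega)]
      simp [gadgetPt]; omega

lemma isPath_gadgetPath {p q i j : ℕ} (hi : i < p) (hj : j < q) :
    IsPath (i, 0) (2 * p + 1 - i, 2 * p + q) (gadgetPath p q i j) := by
  have h := isPath_map_range (gadgetPt p i j) (2 * p + q) fun u _ => alignStep_gadgetPt p i j u
  rwa [show gadgetPt p i j 0 = (i, 0) by simp [gadgetPt]; omega,
    show gadgetPt p i j (2 * p + q) = (2 * p + 1 - i, 2 * p + q) by simp [gadgetPt]; omega,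
    ← gadgetPath_eq_map hi hj] at h

lemma gadgetPt_of_le {p i j u : ℕ} (hi : i ≤ p) (hu : u ≤ i + j) :
    gadgetPt p i j u = (i, u) := by
  simp [gadgetPt]; omega

lemma gadgetPt_of_mem {p i j u : ℕ} (hu₁ : i + j ≤ u) (hu₂ : u ≤ 2 * p + 1 - i + j) :
    gadgetPt p i j u = (u - j, u) := by
  simp [gadgetPt]; omega

lemma gadgetPt_of_ge {p i j u : ℕ} (hu : 2 * p + 1 - i + j ≤ u) :
    gadgetPt p i j u = (2 * p + 1 - i, u) := by
  simp [gadgetPt]; omega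

lemma gadgetY_getElem? {p q m : ℕ} (h : m < 2 * p + q) : (gadgetY p q)[m]? = some (2, m) := by
  simp [gadgetY, h]

lemma gadgetX_getElem?_of_lt {p l a : ℕ} (h : a < p) : (gadgetX p l)[a]? = some (0, a) := by
  simp [gadgetX, List.getElem?_append_left, h]

lemma gadgetX_getElem?_self (p l : ℕ) : (gadgetX p l)[p]? = some (1, l) := by
  simp [gadgetX]

lemma gadgetX_getElem?_of_gt {p l a : ℕ} (h₁ : p < a) (h₂ : a ≤ 2 * p) :
    (gadgetX p l)[a]? = some (0, a) := by
  obtain ⟨b, rfl⟩ : ∃ b, a = p + 1 + b := ⟨a - p - 1, by omega⟩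
  rw [gadgetX, List.append_assoc, List.getElem?_append_right (by simp; omega),
    List.length_map, List.length_range, show p + 1 + b - p = b + 1 by omega]
  simp [show b < p by omega]

section GadgetCost

variable (p q : ℕ) (A B : ℕ → ℕ → ℤ) (D F : ℝ) (l : ℕ) {i j : ℕ}

lemma sum_wStep_gadgetPt_before (hi : i < p) (hj : j < q) :
    ∑ u ∈ Finset.Ico 0 (i + j), wStep (gadgetW p q A B D F) (gadgetX p l) (gadgetY p q)
      (gadgetPt p i j u, gadgetPt p i j (u + 1)) = (i + j) • F := by
  refine (Finset.sum_eq_card_nsmul fun u hu => ?_).trans (by rw [Nat.card_Ico, Nat.sub_zero])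
  obtain ⟨-, hu⟩ := Finset.mem_Ico.1 hu
  rw [gadgetPt_of_le hi.le hu.le, gadgetPt_of_le hi.le hu, wStep_vertical,
    gadgetY_getElem? (by omega)]
  rfl

lemma wStep_gadgetPt_first {t : ℕ} (ht : t < p - i) (hj : j < q) :
    wStep (gadgetW p q A B D F) (gadgetX p l) (gadgetY p q)
      (gadgetPt p i j (i + j + t), gadgetPt p i j (i + j + t + 1)) =
      F + ((q - j : ℕ) : ℝ) * D + ((A (i + t) j : ℝ) - A (i + t + 1) j) := by
  rw [gadgetPt_of_mem (by omega) (by omega), gadgetPt_of_mem (by omega) (by omega),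
    show i + j + t - j = i + t by omega, show i + j + t + 1 - j = i + t + 1 by omega,
    wStep_diagonal, gadgetX_getElem?_of_lt (by omega), gadgetY_getElem? (by omega)]
  simp only [gadgetW, show i + j + t - (i + t) = j by omega]
  rw [if_pos (by omega)]
  ring

lemma sum_wStep_gadgetPt_first (hAp : ∀ j, A p j = 0) (hi : i < p) (hj : j < q) :
    ∑ t ∈ Finset.range (p - i), wStep (gadgetW p q A B D F) (gadgetX p l) (gadgetY p q)
      (gadgetPt p i j (i + j + t), gadgetPt p i j (i + j + t + 1)) =
      (p - i) • (F + ((q - j : ℕ) : ℝ) * D) + A i j := by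
  rw [Finset.sum_congr rfl fun t ht => wStep_gadgetPt_first p q A B D F l
      (Finset.mem_range.1 ht) hj, Finset.sum_add_distrib, Finset.sum_const, Finset.card_range]
  congr 1
  calc ∑ t ∈ Finset.range (p - i), ((A (i + t) j : ℝ) - A (i + t + 1) j)
      = A (i + 0) j - A (i + (p - i)) j :=
        Finset.sum_range_sub' (fun t => (A (i + t) j : ℝ)) _
    _ = A i j := by rw [Nat.add_zero, Nat.add_sub_cancel' hi.le, hAp, Int.cast_zero, sub_zero]

lemma wStep_gadgetPt_middle (hi : i < p) (hj : j < q) :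
    wStep (gadgetW p q A B D F) (gadgetX p l) (gadgetY p q)
      (gadgetPt p i j (p + j), gadgetPt p i j (p + j + 1)) = F + B j l := by
  rw [gadgetPt_of_mem (by omega) (by omega), gadgetPt_of_mem (by omega) (by omega),
    show p + j - j = p by omega, show p + j + 1 - j = p + 1 by omega,
    wStep_diagonal, gadgetX_getElem?_self, gadgetY_getElem? (by omega)]
  simp only [gadgetW, Nat.add_sub_cancel_left]
  rw [if_pos (by omega)]

lemma sum_wStep_gadgetPt_last (hi : i < p) (hj : j < q) :
    ∑ u ∈ Finset.Ico (p + j + 1) (2 * p + 1 - i + j),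
      wStep (gadgetW p q A B D F) (gadgetX p l) (gadgetY p q)
        (gadgetPt p i j u, gadgetPt p i j (u + 1)) =
      (p - i) • (F + ((j + 1 : ℕ) : ℝ) * D) := by
  refine (Finset.sum_eq_card_nsmul fun u hu => ?_).trans
    (by rw [Nat.card_Ico, show 2 * p + 1 - i + j - (p + j + 1) = p - i by omega])
  obtain ⟨hu₁, hu₂⟩ := Finset.mem_Ico.1 hu
  rw [gadgetPt_of_mem (by omega) hu₂.le, gadgetPt_of_mem (by omega) hu₂,
    show u + 1 - j = u - j + 1 by omega, wStep_diagonal,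
    gadgetX_getElem?_of_gt (by omega) (by omega), gadgetY_getElem? (by omega)]
  simp only [gadgetW, show u - (u - j) = j by omega]
  rw [if_neg (by omega), if_pos (by omega)]

lemma sum_wStep_gadgetPt_after (hi : i < p) (hj : j < q) :
    ∑ u ∈ Finset.Ico (2 * p + 1 - i + j) (2 * p + q),
      wStep (gadgetW p q A B D F) (gadgetX p l) (gadgetY p q)
        (gadgetPt p i j u, gadgetPt p i j (u + 1)) = (q + i - (j + 1)) • F := by
  refine (Finset.sum_eq_card_nsmul fun u hu => ?_).trans
    (by rw [Nat.card_Ico, show 2 * p + q - (2 * p + 1 - i + j) = q + i - (j + 1) by omega])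
  obtain ⟨hu₁, hu₂⟩ := Finset.mem_Ico.1 hu
  rw [gadgetPt_of_ge hu₁, gadgetPt_of_ge (by omega), wStep_vertical, gadgetY_getElem? hu₂]
  rfl

lemma wCost_gadgetPath (hAp : ∀ j, A p j = 0) (hi : i < p) (hj : j < q) :
    wCost (gadgetW p q A B D F) (gadgetX p l) (gadgetY p q) (gadgetPath p q i j) =
      ((2 * p + q : ℕ) : ℝ) * F + ((p - i : ℕ) : ℝ) * ((q : ℝ) + 1) * D +
        (A i j : ℝ) + (B j l : ℝ) := by
  rw [gadgetPath_eq_map hi hj, wCost_map_range,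
    sum_range_eq_blocks _ (by omega : i + j ≤ p + j) (by omega : p + j < 2 * p + 1 - i + j)
      (by omega : 2 * p + 1 - i + j ≤ 2 * p + q), show p + j - (i + j) = p - i by omega,
    sum_wStep_gadgetPt_before p q A B D F l hi hj,
    sum_wStep_gadgetPt_first p q A B D F l hAp hi hj,
    wStep_gadgetPt_middle p q A B D F l hi hj, sum_wStep_gadgetPt_last p q A B D F l hi hj,
    sum_wStep_gadgetPt_after p q A B D F l hi hj]
  simp only [nsmul_eq_mul]
  push_cast [Nat.cast_sub hi.le, Nat.cast_sub hj.le, Nat.cast_sub (show j + 1 ≤ q + i by omega)]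
  ring

end GadgetCost

theorem gadget_alignment_cost_general (p q : ℕ)
    (A B : ℕ → ℕ → ℤ) (hAp : ∀ j, A p j = 0)
    (D F : ℝ)
    (l i j : ℕ) (hi : i < p) (hj : j < q) :
    IsPath (i, 0) (2 * p + 1 - i, 2 * p + q) (gadgetPath p q i j) ∧
    wCost (gadgetW p q A B D F) (gadgetX p l) (gadgetY p q) (gadgetPath p q i j) =
      ((2 * p + q : ℕ) : ℝ) * F + ((p - i : ℕ) : ℝ) * ((q : ℝ) + 1) * D +
        (A i j : ℝ) + (B j l : ℝ) :=
  ⟨isPath_gadgetPath hi hj, wCost_gadgetPath p q A B D F l hAp hi hj⟩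

/-- Cost of the diagonal alignments in the min-plus gadget: for
`i ∈ [0,p)`, `j ∈ [0,q)`, the alignment `A_{i,j,ℓ}` (a path from `(i,0)` to
`(2p+1-i, 2p+q)` in the alignment graph of `X_ℓ` and `Y`) has total cost exactly
`|Y|·F + (p-i)(q+1)·D + A_{i,j} + B_{j,ℓ}`. -/
theorem gadget_alignment_cost (p q r E : ℕ) (hp : 1 ≤ p) (hq : 1 ≤ q)
    (A B : ℕ → ℕ → ℤ) (hAp : ∀ j, A p j = 0)
    (hE : ∀ i j, |A i j| ≤ (E : ℤ) ∧ |B i j| ≤ (E : ℤ))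
    (D F : ℝ)
    (hED : (E : ℝ) * (((2 * p + 1) + (2 * p + q) : ℕ) : ℝ) < D)
    (hDF : D * (((2 * p + 1) + (2 * p + q) : ℕ) : ℝ) < F)
    (l i j : ℕ) (hl : l < r) (hi : i < p) (hj : j < q) :
    IsPath (i, 0) (2 * p + 1 - i, 2 * p + q) (gadgetPath p q i j) ∧
    wCost (gadgetW p q A B D F) (gadgetX p l) (gadgetY p q) (gadgetPath p q i j) =
      ((2 * p + q : ℕ) : ℝ) * F + ((p - i : ℕ) : ℝ) * ((q : ℝ) + 1) * D +
        (A i j : ℝ) + (B j l : ℝ) :=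
  gadget_alignment_cost_general p q A B hAp D F l i j hi hj
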